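/- Let T be the (q+1)-homogeneous rooted tree with q ≥ 2, let φ be a self-map of T, let 1 ≤ p < ∞, and write λ_{k,n} = c_k N_{k,n} / c_n. Then C_φ is an isometry on T_p (i.e. ‖f ∘ φ‖_p = ‖f‖_p for all f ∈ T_p) if and only if all of the following hold: (1) |φ(v)| ≤ |v| for all v ∈ T (in particular φ(o) = o); (2) Σ_{k=0}^n λ_{k,n} = 1 for all n ≥ 0; (3) for every k ≥ 0 and n ≥ 0, N_φ(n,w) = N_{k,n} for every w with |w| = k; (4) sup_{n ≥ 0} λ_{k,n} = 1 for every k ≥ 0 (in particular φ is surjective). -/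

import Mathlib

open scoped BigOperators Classical

noncomputable section

/-- `treeC q n` is the number `c_n` of vertices at level `n` of the
`(q+1)`-homogeneous rooted tree: `c_0 = 1` and `c_n = (q+1) q^(n-1)` for `n ≥ 1`. -/
def treeC (q n : ℕ) : ℕ := if n = 0 then 1 else (q + 1) * q ^ (n - 1)

/-- An abstract `(q+1)`-homogeneous rooted tree, described by its vertex set, root,
level function `|·|` (graph distance to the root), and the level counts:
level `n` contains exactly `c_n = treeC q n` vertices. -/
structure HomTree (q : ℕ) where
  V : Type
  root : V
  level : V → ℕ
  level_eq_zero_iff : ∀ v : V, level v = 0 ↔ v = root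
  finiteLevel : ∀ n : ℕ, {v : V | level v = n}.Finite
  card_level : ∀ n : ℕ, (finiteLevel n).toFinset.card = treeC q n

namespace HomTree

variable {q : ℕ} (T : HomTree q)

/-- The set `D_n` of vertices of level `n`, as a finset. -/
def levelFinset (n : ℕ) : Finset T.V := (T.finiteLevel n).toFinset

/-- `M_p(n, f)` for `0 < p < ∞`:
`M_p(n,f) = ((1/c_n) ∑_{|v|=n} |f v|^p)^(1/p)` (which equals `|f o|` for `n = 0`). -/
def Mp (p : ℝ) (n : ℕ) (f : T.V → ℂ) : ℝ :=
  ((1 / (treeC q n : ℝ)) * ∑ v ∈ T.levelFinset n, ‖f v‖ ^ p) ^ (1 / p)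

/-- `M_∞(n, f) = max_{|v| = n} |f v|`. -/
def Minf (n : ℕ) (f : T.V → ℂ) : ℝ :=
  sSup ((fun v => ‖f v‖) '' {v : T.V | T.level v = n})

/-- `f ∈ T_p`, i.e. `‖f‖_p = sup_n M_p(n,f) < ∞`. -/
def memTp (p : ℝ) (f : T.V → ℂ) : Prop := BddAbove (Set.range fun n => T.Mp p n f)

/-- `‖f‖_p = sup_n M_p(n, f)`. -/
def normTp (p : ℝ) (f : T.V → ℂ) : ℝ := ⨆ n, T.Mp p n f

/-- `f ∈ T_∞`. -/
def memTinf (f : T.V → ℂ) : Prop := BddAbove (Set.range fun n => T.Minf n f)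

/-- `‖f‖_∞ = sup_n M_∞(n, f)`. -/
def normTinf (f : T.V → ℂ) : ℝ := ⨆ n, T.Minf n f

/-- `f ∈ T_{p,0}`: `f ∈ T_p` and `M_p(n,f) → 0` as `n → ∞`. -/
def memTp0 (p : ℝ) (f : T.V → ℂ) : Prop :=
  T.memTp p f ∧ Filter.Tendsto (fun n => T.Mp p n f) Filter.atTop (nhds 0)

/-- `f ∈ T_{∞,0}`. -/
def memTinf0 (f : T.V → ℂ) : Prop :=
  T.memTinf f ∧ Filter.Tendsto (fun n => T.Minf n f) Filter.atTop (nhds 0)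

/-- `N_φ(n, w)`: the number of preimages of `w` under `φ` at level `n`. -/
def Nphi (phi : T.V → T.V) (n : ℕ) (w : T.V) : ℕ :=
  ((T.levelFinset n).filter fun v => phi v = w).card

/-- `N_{m,n} = max_{|w| = m} N_φ(n, w)`. -/
def Nmax (phi : T.V → T.V) (m n : ℕ) : ℕ :=
  (T.levelFinset m).sup fun w => T.Nphi phi n w

/-- `C_φ` is a bounded operator on `T_p`: it maps `T_p` into `T_p` and
`‖f ∘ φ‖_p ≤ C ‖f‖_p` for some constant `C`. -/
def BoundedCompTp (p : ℝ) (phi : T.V → T.V) : Prop :=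
  (∀ f : T.V → ℂ, T.memTp p f → T.memTp p (f ∘ phi)) ∧
  ∃ C : ℝ, ∀ f : T.V → ℂ, T.memTp p f → T.normTp p (f ∘ phi) ≤ C * T.normTp p f

/-- The operator norm of `C_φ` on `T_p`: `sup {‖f ∘ φ‖_p : f ∈ T_p, ‖f‖_p = 1}`. -/
def opNormTp (p : ℝ) (phi : T.V → T.V) : ℝ :=
  sSup {x : ℝ | ∃ f : T.V → ℂ, T.memTp p f ∧ T.normTp p f = 1 ∧ x = T.normTp p (f ∘ phi)}

/-- `C_φ` is a bounded operator on `T_{p,0}`. -/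
def BoundedCompTp0 (p : ℝ) (phi : T.V → T.V) : Prop :=
  (∀ f : T.V → ℂ, T.memTp0 p f → T.memTp0 p (f ∘ phi)) ∧
  ∃ C : ℝ, ∀ f : T.V → ℂ, T.memTp0 p f → T.normTp p (f ∘ phi) ≤ C * T.normTp p f

/-- The operator norm of `C_φ` on `T_{p,0}`. -/
def opNormTp0 (p : ℝ) (phi : T.V → T.V) : ℝ :=
  sSup {x : ℝ | ∃ f : T.V → ℂ, T.memTp0 p f ∧ T.normTp p f = 1 ∧ x = T.normTp p (f ∘ phi)}

/-- `C_φ` is a bounded operator on `T_{∞,0}`. -/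
def BoundedCompTinf0 (phi : T.V → T.V) : Prop :=
  (∀ f : T.V → ℂ, T.memTinf0 f → T.memTinf0 (f ∘ phi)) ∧
  ∃ C : ℝ, ∀ f : T.V → ℂ, T.memTinf0 f → T.normTinf (f ∘ phi) ≤ C * T.normTinf f

end HomTree

/-!
Write `A_n g` for the mean of `g : T → ℝ` over the level `D_n`, so that `‖f‖_p^p = sup_n A_n |f|^p`.
Applied to `f = g^{1/p}`, the isometry property gives `sup_n A_n (g ∘ φ) = sup_n A_n g`
for every nonnegative `g` with bounded level means. Testing with `g = δ_w` gives
`sup_n N_φ(n,w)/c_n = 1/c_{|w|}`; since `c_n` is strictly increasing when `q ≥ 2`, this forces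
`|φ v| ≤ |v|`. Testing with `g = 2 + δ_{w'} - δ_w` for `w, w'` on one level, whose level means are
all `2`, shows that `N_φ(n, ·)` is constant on levels, and then the `δ_w` computation becomes
`sup_n λ_{k,n} = 1`. Under (1) and (3) a fibre count gives `A_n (g ∘ φ) = ∑_{k ≤ n} λ_{k,n} A_k g`:
with `g = 1` this is (2), and conversely it makes `M_p(n, f ∘ φ)^p` a convex combination of the
`M_p(k, f)^p`, each of which is recovered as a supremum over `n` by (4).
-/

open Finset

namespace Real

variable {ι : Sort*} {x : ι → ℝ} {r : ℝ}

lemma bddAbove_range_rpow_iff (hx : ∀ i, 0 ≤ x i) (hr : 0 < r) :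
    BddAbove (Set.range fun i => x i ^ r) ↔ BddAbove (Set.range x) := by
  have bdd_rpow : ∀ {y : ι → ℝ} {s : ℝ}, (∀ i, 0 ≤ y i) → 0 ≤ s →
      BddAbove (Set.range y) → BddAbove (Set.range fun i => y i ^ s) := by
    rintro y s hy hs ⟨B, hB⟩
    exact ⟨B ^ s, Set.forall_mem_range.2 fun i =>
      rpow_le_rpow (hy i) (hB (Set.mem_range_self i)) hs⟩
  refine ⟨fun h => ?_, bdd_rpow hx hr.le⟩
  simpa only [rpow_rpow_inv (hx _) hr.ne'] using
    bdd_rpow (fun i => rpow_nonneg (hx i) r) (inv_nonneg.2 hr.le) h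

lemma ciSup_rpow [Nonempty ι] (hx : ∀ i, 0 ≤ x i) (hr : 0 < r) (h : BddAbove (Set.range x)) :
    ⨆ i, x i ^ r = (⨆ i, x i) ^ r := by
  have hS : 0 ≤ ⨆ i, x i ^ r := iSup_nonneg fun i => rpow_nonneg (hx i) r
  have hbdd := (bddAbove_range_rpow_iff hx hr).2 h
  refine le_antisymm (ciSup_le fun i => rpow_le_rpow (hx i) (le_ciSup h i) hr.le) ?_
  rw [← le_rpow_inv_iff_of_pos (iSup_nonneg hx) hS hr]
  exact ciSup_le fun i => (le_rpow_inv_iff_of_pos (hx i) hS hr).2 (le_ciSup hbdd i)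

end Real

def pthRoot {α : Type*} (p : ℝ) (g : α → ℝ) : α → ℂ := fun a => ((g a ^ (1 / p) : ℝ) : ℂ)

lemma pthRoot_comp {α β : Type*} (p : ℝ) (g : α → ℝ) (φ : β → α) :
    pthRoot p g ∘ φ = pthRoot p (g ∘ φ) := rfl

lemma norm_pthRoot_rpow {α : Type*} {p : ℝ} {g : α → ℝ} {a : α} (hp : 0 < p) (hg : 0 ≤ g a) :
    ‖pthRoot p g a‖ ^ p = g a := by
  rw [pthRoot, Complex.norm_real, Real.norm_of_nonneg (Real.rpow_nonneg hg _), one_div,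
    Real.rpow_inv_rpow hg hp.ne']

lemma treeC_pos {q : ℕ} (hq : 0 < q) (n : ℕ) : 0 < treeC q n := by
  unfold treeC
  split <;> positivity

lemma treeC_strictMono {q : ℕ} (hq : 2 ≤ q) : StrictMono (treeC q) := by
  refine strictMono_nat_of_lt_succ fun n => ?_
  rcases n with _ | n
  · simp [treeC]
    omega
  · simp only [treeC, Nat.add_one_ne_zero, if_false, add_tsub_cancel_right]
    exact Nat.mul_lt_mul_of_pos_left (Nat.pow_lt_pow_right (by omega) (by omega)) (by omega)

namespace HomTree

variable {q : ℕ} {T : HomTree q} {p : ℝ} {phi : T.V → T.V}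

lemma mem_levelFinset {n : ℕ} {v : T.V} : v ∈ T.levelFinset n ↔ T.level v = n :=
  Set.Finite.mem_toFinset _

lemma card_levelFinset (n : ℕ) : #(T.levelFinset n) = treeC q n := T.card_level n

lemma pairwiseDisjoint_levelFinset (s : Set ℕ) : s.PairwiseDisjoint T.levelFinset :=
  fun _ _ _ _ hij => disjoint_left.2 fun _ hi hj =>
    hij ((mem_levelFinset.1 hi).symm.trans (mem_levelFinset.1 hj))

variable (T) in
def levelMean (n : ℕ) (g : T.V → ℝ) : ℝ := 1 / (treeC q n : ℝ) * ∑ v ∈ T.levelFinset n, g v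

lemma levelMean_nonneg {g : T.V → ℝ} (hg : ∀ v, 0 ≤ g v) (n : ℕ) : 0 ≤ T.levelMean n g :=
  mul_nonneg (by positivity) (sum_nonneg fun v _ => hg v)

lemma levelMean_const (hq : 0 < q) (n : ℕ) (a : ℝ) : T.levelMean n (fun _ => a) = a := by
  have hc : (treeC q n : ℝ) ≠ 0 := by exact_mod_cast (treeC_pos hq n).ne'
  rw [levelMean, sum_const, card_levelFinset, nsmul_eq_mul]
  field_simp

lemma levelMean_add (n : ℕ) (g h : T.V → ℝ) :
    T.levelMean n (fun v => g v + h v) = T.levelMean n g + T.levelMean n h := by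
  rw [levelMean, sum_add_distrib, mul_add, levelMean, levelMean]

lemma levelMean_sub (n : ℕ) (g h : T.V → ℝ) :
    T.levelMean n (fun v => g v - h v) = T.levelMean n g - T.levelMean n h := by
  rw [levelMean, sum_sub_distrib, mul_sub, levelMean, levelMean]

lemma levelMean_ite_eq (n : ℕ) (w : T.V) :
    T.levelMean n (fun v => if v = w then 1 else 0) =
      if T.level w = n then 1 / (treeC q n : ℝ) else 0 := by
  rw [levelMean, sum_ite_eq', apply_ite (1 / (treeC q n : ℝ) * ·), mul_one, mul_zero]
  simp only [mem_levelFinset]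

lemma levelMean_ite_comp_eq (phi : T.V → T.V) (n : ℕ) (w : T.V) :
    T.levelMean n (fun v => if phi v = w then 1 else 0) =
      (T.Nphi phi n w : ℝ) / (treeC q n : ℝ) := by
  rw [levelMean, sum_boole, one_div_mul_eq_div]
  rfl

lemma Mp_eq_levelMean_rpow (n : ℕ) (f : T.V → ℂ) :
    T.Mp p n f = T.levelMean n (fun v => ‖f v‖ ^ p) ^ (1 / p) := rfl

lemma Mp_nonneg (n : ℕ) (f : T.V → ℂ) : 0 ≤ T.Mp p n f :=
  Real.rpow_nonneg (levelMean_nonneg (fun _ => by positivity) n) _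

lemma Mp_rpow (hp : 0 < p) (n : ℕ) (f : T.V → ℂ) :
    T.Mp p n f ^ p = T.levelMean n (fun v => ‖f v‖ ^ p) := by
  rw [Mp_eq_levelMean_rpow, one_div,
    Real.rpow_inv_rpow (levelMean_nonneg (fun _ => by positivity) n) hp.ne']

lemma normTp_nonneg {f : T.V → ℂ} (hf : T.memTp p f) : 0 ≤ T.normTp p f :=
  (Mp_nonneg 0 f).trans (le_ciSup hf 0)

lemma Mp_pthRoot (hp : 0 < p) {g : T.V → ℝ} (hg : ∀ v, 0 ≤ g v) (n : ℕ) :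
    T.Mp p n (pthRoot p g) = T.levelMean n g ^ (1 / p) := by
  simp only [Mp_eq_levelMean_rpow, norm_pthRoot_rpow hp (hg _)]

lemma memTp_pthRoot_iff (hp : 0 < p) {g : T.V → ℝ} (hg : ∀ v, 0 ≤ g v) :
    T.memTp p (pthRoot p g) ↔ BddAbove (Set.range fun n => T.levelMean n g) := by
  simp only [memTp, Mp_pthRoot hp hg]
  exact Real.bddAbove_range_rpow_iff (levelMean_nonneg hg) (by positivity)

lemma normTp_pthRoot (hp : 0 < p) {g : T.V → ℝ} (hg : ∀ v, 0 ≤ g v)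
    (hbdd : BddAbove (Set.range fun n => T.levelMean n g)) :
    T.normTp p (pthRoot p g) = (⨆ n, T.levelMean n g) ^ (1 / p) := by
  simp only [normTp, Mp_pthRoot hp hg]
  exact Real.ciSup_rpow (levelMean_nonneg hg) (by positivity) hbdd

variable (T) in
def IsIsometryComp (p : ℝ) (phi : T.V → T.V) : Prop :=
  (∀ f : T.V → ℂ, T.memTp p f → T.memTp p (f ∘ phi)) ∧
    ∀ f : T.V → ℂ, T.memTp p f → T.normTp p (f ∘ phi) = T.normTp p f

variable (T) in
def lam (phi : T.V → T.V) (k n : ℕ) : ℝ :=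
  (treeC q k : ℝ) * (T.Nmax phi k n : ℝ) / (treeC q n : ℝ)

lemma lam_nonneg (k n : ℕ) : 0 ≤ T.lam phi k n := by
  unfold lam
  positivity

namespace IsIsometryComp

lemma iSup_levelMean_comp (h : T.IsIsometryComp p phi) (hp : 0 < p) {g : T.V → ℝ}
    (hg : ∀ v, 0 ≤ g v) (hbdd : BddAbove (Set.range fun n => T.levelMean n g)) :
    BddAbove (Set.range fun n => T.levelMean n (g ∘ phi)) ∧
      ⨆ n, T.levelMean n (g ∘ phi) = ⨆ n, T.levelMean n g := by
  have hg' : ∀ v, 0 ≤ (g ∘ phi) v := fun v => hg (phi v)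
  have hmem := (memTp_pthRoot_iff hp hg).2 hbdd
  have hmem' := h.1 _ hmem
  rw [pthRoot_comp] at hmem'
  have hbdd' := (memTp_pthRoot_iff hp hg').1 hmem'
  have hnorm := h.2 _ hmem
  rw [pthRoot_comp, normTp_pthRoot hp hg' hbdd', normTp_pthRoot hp hg hbdd] at hnorm
  exact ⟨hbdd', Real.rpow_left_injOn (one_div_pos.2 hp).ne'
    (Real.iSup_nonneg (levelMean_nonneg hg')) (Real.iSup_nonneg (levelMean_nonneg hg)) hnorm⟩

lemma iSup_Nphi_div (h : T.IsIsometryComp p phi) (hp : 0 < p) (w : T.V) :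
    BddAbove (Set.range fun n => (T.Nphi phi n w : ℝ) / (treeC q n : ℝ)) ∧
      ⨆ n, (T.Nphi phi n w : ℝ) / (treeC q n : ℝ) = 1 / (treeC q (T.level w) : ℝ) := by
  let δ : T.V → ℝ := fun v => if v = w then 1 else 0
  have hδ : ∀ v, 0 ≤ δ v := fun v => by positivity
  have hle : ∀ n, T.levelMean n δ ≤ 1 / (treeC q (T.level w) : ℝ) := fun n => by
    rw [levelMean_ite_eq]
    split_ifs with hn
    · rw [hn]
    · positivity
  have hbdd : BddAbove (Set.range fun n => T.levelMean n δ) := ⟨_, Set.forall_mem_range.2 hle⟩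
  have hsup : ⨆ n, T.levelMean n δ = 1 / (treeC q (T.level w) : ℝ) :=
    le_antisymm (ciSup_le hle)
      (le_ciSup_of_le hbdd (T.level w) (by rw [levelMean_ite_eq, if_pos rfl]))
  have hcomp : ∀ n, T.levelMean n (δ ∘ phi) = (T.Nphi phi n w : ℝ) / (treeC q n : ℝ) :=
    fun n => levelMean_ite_comp_eq phi n w
  simpa only [hcomp, hsup] using h.iSup_levelMean_comp hp hδ hbdd

lemma Nphi_div_le (h : T.IsIsometryComp p phi) (hp : 0 < p) (w : T.V) (n : ℕ) :
    (T.Nphi phi n w : ℝ) / (treeC q n : ℝ) ≤ 1 / (treeC q (T.level w) : ℝ) := by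
  obtain ⟨hbdd, hsup⟩ := h.iSup_Nphi_div hp w
  exact hsup ▸ le_ciSup hbdd n

lemma level_map_le (h : T.IsIsometryComp p phi) (hp : 0 < p) (hq : 2 ≤ q) (v : T.V) :
    T.level (phi v) ≤ T.level v := by
  have hc : ∀ n, (0 : ℝ) < treeC q n := fun n => by exact_mod_cast treeC_pos (by omega) n
  have hN : 1 ≤ T.Nphi phi (T.level v) (phi v) :=
    card_pos.2 ⟨v, mem_filter.2 ⟨mem_levelFinset.2 rfl, rfl⟩⟩
  have hle : (treeC q (T.level (phi v)) : ℝ) ≤ treeC q (T.level v) :=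
    (one_div_le_one_div (hc _) (hc _)).1
      ((div_le_div_of_nonneg_right (by exact_mod_cast hN) (hc _).le).trans (h.Nphi_div_le hp (phi v) (T.level v)))
  exact (treeC_strictMono hq).le_iff_le.1 (by exact_mod_cast hle)

lemma Nphi_le_of_level_eq (h : T.IsIsometryComp p phi) (hp : 0 < p) (hq : 0 < q) {w w' : T.V}
    (hww' : T.level w = T.level w') (n : ℕ) : T.Nphi phi n w' ≤ T.Nphi phi n w := by
  by_contra! hlt
  let g : T.V → ℝ := fun v => 2 + (if v = w' then 1 else 0) - (if v = w then 1 else 0)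
  have hg : ∀ v, 0 ≤ g v := fun v => by
    simp only [g]
    split_ifs <;> norm_num
  have hmean : ∀ j, T.levelMean j g = 2 := fun j => by
    simp only [g, levelMean_sub, levelMean_add, levelMean_const hq, levelMean_ite_eq, hww',
      add_sub_cancel_right]
  have hbdd : BddAbove (Set.range fun j => T.levelMean j g) :=
    ⟨2, Set.forall_mem_range.2 fun j => (hmean j).le⟩
  obtain ⟨hbdd', hsup⟩ := h.iSup_levelMean_comp hp hg hbdd
  have hmean' : T.levelMean n (g ∘ phi) =
      2 + ((T.Nphi phi n w' : ℝ) - T.Nphi phi n w) / (treeC q n : ℝ) := by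
    simp only [g, Function.comp_def, levelMean_sub, levelMean_add, levelMean_const hq,
      levelMean_ite_comp_eq]
    ring
  have hle : T.levelMean n (g ∘ phi) ≤ 2 := by
    simpa only [hsup, hmean, ciSup_const] using le_ciSup hbdd' n
  have hpos : 0 < ((T.Nphi phi n w' : ℝ) - T.Nphi phi n w) / (treeC q n : ℝ) :=
    div_pos (sub_pos.2 (by exact_mod_cast hlt)) (by exact_mod_cast treeC_pos hq n)
  linarith

lemma Nphi_eq_Nmax (h : T.IsIsometryComp p phi) (hp : 0 < p) (hq : 0 < q) {k n : ℕ} {w : T.V}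
    (hw : T.level w = k) : T.Nphi phi n w = T.Nmax phi k n := by
  have hconst : ∀ w' ∈ T.levelFinset k, T.Nphi phi n w' = T.Nphi phi n w := fun w' hw' => by
    have hww' : T.level w = T.level w' := hw.trans (mem_levelFinset.1 hw').symm
    exact le_antisymm (h.Nphi_le_of_level_eq hp hq hww' n)
      (h.Nphi_le_of_level_eq hp hq hww'.symm n)
  rw [Nmax, sup_congr rfl hconst, sup_const ⟨w, mem_levelFinset.2 hw⟩]

lemma iSup_lam (h : T.IsIsometryComp p phi) (hp : 0 < p) (hq : 0 < q) (k : ℕ) :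
    ⨆ n, T.lam phi k n = 1 := by
  obtain ⟨w, hw⟩ : (T.levelFinset k).Nonempty := by
    rw [← card_pos, card_levelFinset]
    exact treeC_pos hq k
  have hwk := mem_levelFinset.1 hw
  have hlam : ∀ n, T.lam phi k n = treeC q k * ((T.Nphi phi n w : ℝ) / (treeC q n : ℝ)) :=
    fun n => by rw [lam, h.Nphi_eq_Nmax hp hq hwk, mul_div_assoc]
  have hc : (treeC q k : ℝ) ≠ 0 := by exact_mod_cast (treeC_pos hq k).ne'
  simp only [hlam]
  rw [← Real.mul_iSup_of_nonneg (by positivity), (h.iSup_Nphi_div hp w).2, hwk,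
    mul_one_div_cancel hc]

end IsIsometryComp

lemma sum_comp_eq_sum_Nphi_mul (phi : T.V → T.V) {n : ℕ} {t : Finset T.V}
    (hmaps : ∀ v ∈ T.levelFinset n, phi v ∈ t) (g : T.V → ℝ) :
    ∑ v ∈ T.levelFinset n, g (phi v) = ∑ w ∈ t, (T.Nphi phi n w : ℝ) * g w := by
  rw [← sum_fiberwise_of_maps_to hmaps]
  refine sum_congr rfl fun w _ => ?_
  rw [sum_congr rfl fun v hv => by rw [(mem_filter.1 hv).2], sum_const, nsmul_eq_mul]
  rfl

lemma Nmax_eq_zero_of_lt (h1 : ∀ v, T.level (phi v) ≤ T.level v) {k n : ℕ} (hnk : n < k) :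
    T.Nmax phi k n = 0 := by
  refine Nat.eq_zero_of_le_zero (Finset.sup_le fun w hw => ?_)
  rw [Nat.le_zero, Nphi, card_eq_zero, filter_eq_empty_iff]
  intro v hv hvw
  have := h1 v
  rw [hvw, mem_levelFinset.1 hw, mem_levelFinset.1 hv] at this
  omega

lemma levelMean_comp (hq : 0 < q) (h1 : ∀ v, T.level (phi v) ≤ T.level v)
    (h3 : ∀ k n : ℕ, ∀ w : T.V, T.level w = k → T.Nphi phi n w = T.Nmax phi k n)
    (g : T.V → ℝ) (n : ℕ) :
    T.levelMean n (g ∘ phi) = ∑ k ∈ range (n + 1), T.lam phi k n * T.levelMean k g := by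
  have hmaps : ∀ v ∈ T.levelFinset n, phi v ∈ (range (n + 1)).biUnion T.levelFinset :=
    fun v hv => mem_biUnion.2 ⟨T.level (phi v),
      mem_range.2 (Nat.lt_succ_of_le ((h1 v).trans_eq (mem_levelFinset.1 hv))),
      mem_levelFinset.2 rfl⟩
  rw [levelMean]
  simp only [Function.comp_apply]
  rw [sum_comp_eq_sum_Nphi_mul phi hmaps,
    sum_biUnion (pairwiseDisjoint_levelFinset _), mul_sum]
  refine sum_congr rfl fun k _ => ?_
  rw [sum_congr rfl fun w hw => by rw [h3 k n w (mem_levelFinset.1 hw)], ← mul_sum, lam,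
    levelMean]
  have hk : (treeC q k : ℝ) ≠ 0 := by exact_mod_cast (treeC_pos hq k).ne'
  field_simp

lemma sum_lam_eq_one (hq : 0 < q) (h1 : ∀ v, T.level (phi v) ≤ T.level v)
    (h3 : ∀ k n : ℕ, ∀ w : T.V, T.level w = k → T.Nphi phi n w = T.Nmax phi k n) (n : ℕ) :
    ∑ k ∈ range (n + 1), T.lam phi k n = 1 := by
  simpa only [Function.comp_def, levelMean_const hq, mul_one] using
    (levelMean_comp hq h1 h3 (fun _ => 1) n).symm

lemma Mp_comp_rpow (hp : 0 < p) (hq : 0 < q) (h1 : ∀ v, T.level (phi v) ≤ T.level v)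
    (h3 : ∀ k n : ℕ, ∀ w : T.V, T.level w = k → T.Nphi phi n w = T.Nmax phi k n)
    (f : T.V → ℂ) (n : ℕ) :
    T.Mp p n (f ∘ phi) ^ p = ∑ k ∈ range (n + 1), T.lam phi k n * T.Mp p k f ^ p := by
  simp only [Mp_rpow hp]
  exact levelMean_comp hq h1 h3 (fun v => ‖f v‖ ^ p) n

lemma Mp_comp_le_normTp (hp : 0 < p) (hq : 0 < q) (h1 : ∀ v, T.level (phi v) ≤ T.level v)
    (h2 : ∀ n, ∑ k ∈ range (n + 1), T.lam phi k n = 1)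
    (h3 : ∀ k n : ℕ, ∀ w : T.V, T.level w = k → T.Nphi phi n w = T.Nmax phi k n)
    {f : T.V → ℂ} (hf : T.memTp p f) (n : ℕ) : T.Mp p n (f ∘ phi) ≤ T.normTp p f := by
  rw [← Real.rpow_le_rpow_iff (Mp_nonneg n _) (normTp_nonneg hf) hp, Mp_comp_rpow hp hq h1 h3]
  calc ∑ k ∈ range (n + 1), T.lam phi k n * T.Mp p k f ^ p
      ≤ ∑ k ∈ range (n + 1), T.lam phi k n * T.normTp p f ^ p :=
        sum_le_sum fun k _ => mul_le_mul_of_nonneg_left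
          (Real.rpow_le_rpow (Mp_nonneg k f) (le_ciSup hf k) hp.le) (lam_nonneg k n)
    _ = T.normTp p f ^ p := by rw [← sum_mul, h2 n, one_mul]

lemma Mp_le_normTp_comp (hp : 0 < p) (hq : 0 < q) (h1 : ∀ v, T.level (phi v) ≤ T.level v)
    (h3 : ∀ k n : ℕ, ∀ w : T.V, T.level w = k → T.Nphi phi n w = T.Nmax phi k n)
    (h4 : ∀ k, ⨆ n, T.lam phi k n = 1)
    {f : T.V → ℂ} (hf : T.memTp p (f ∘ phi)) (k : ℕ) : T.Mp p k f ≤ T.normTp p (f ∘ phi) := by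
  rw [← Real.rpow_le_rpow_iff (Mp_nonneg k _) (normTp_nonneg hf) hp]
  have hterm : ∀ n, T.lam phi k n * T.Mp p k f ^ p ≤ T.Mp p n (f ∘ phi) ^ p := fun n => by
    rcases lt_or_ge n k with hnk | hkn
    · rw [lam, Nmax_eq_zero_of_lt h1 hnk, Nat.cast_zero, mul_zero, zero_div, zero_mul]
      exact Real.rpow_nonneg (Mp_nonneg n _) p
    · rw [Mp_comp_rpow hp hq h1 h3]
      exact single_le_sum (f := fun j => T.lam phi j n * T.Mp p j f ^ p)
        (fun j _ => mul_nonneg (lam_nonneg j n) (Real.rpow_nonneg (Mp_nonneg j f) p)) (mem_range.2 (by omega))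
  calc T.Mp p k f ^ p = ⨆ n, T.lam phi k n * T.Mp p k f ^ p := by
        rw [← Real.iSup_mul_of_nonneg (Real.rpow_nonneg (Mp_nonneg k f) p), h4 k, one_mul]
    _ ≤ T.normTp p (f ∘ phi) ^ p := ciSup_le fun n =>
        (hterm n).trans (Real.rpow_le_rpow (Mp_nonneg n _) (le_ciSup hf n) hp.le)

lemma isIsometryComp_of_lam (hp : 0 < p) (hq : 0 < q) (h1 : ∀ v, T.level (phi v) ≤ T.level v)
    (h2 : ∀ n, ∑ k ∈ range (n + 1), T.lam phi k n = 1)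
    (h3 : ∀ k n : ℕ, ∀ w : T.V, T.level w = k → T.Nphi phi n w = T.Nmax phi k n)
    (h4 : ∀ k, ⨆ n, T.lam phi k n = 1) : T.IsIsometryComp p phi := by
  have hmem : ∀ f : T.V → ℂ, T.memTp p f → T.memTp p (f ∘ phi) := fun f hf =>
    ⟨_, Set.forall_mem_range.2 (Mp_comp_le_normTp hp hq h1 h2 h3 hf)⟩
  exact ⟨hmem, fun f hf => le_antisymm (ciSup_le (Mp_comp_le_normTp hp hq h1 h2 h3 hf))
    (ciSup_le (Mp_le_normTp_comp hp hq h1 h3 h4 (hmem f hf)))⟩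

end HomTree

/-- For `q ≥ 2` and `1 ≤ p < ∞`, with `λ_{k,n} = c_k N_{k,n}/c_n`: `C_φ` is an isometry
on `T_p` iff (1) `|φ v| ≤ |v|`; (2) `∑_{k=0}^n λ_{k,n} = 1` for all `n`;
(3) `N_φ(n, w) = N_{k,n}` whenever `|w| = k`; (4) `sup_n λ_{k,n} = 1` for all `k`. -/
theorem isometry_comp_Tp_iff (q : ℕ) (hq : 2 ≤ q) (T : HomTree q) (p : ℝ) (hp : 1 ≤ p)
    (phi : T.V → T.V) :
    ((∀ f : T.V → ℂ, T.memTp p f → T.memTp p (f ∘ phi)) ∧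
      (∀ f : T.V → ℂ, T.memTp p f → T.normTp p (f ∘ phi) = T.normTp p f)) ↔
    ((∀ v : T.V, T.level (phi v) ≤ T.level v) ∧
      (∀ n : ℕ, ∑ k ∈ Finset.range (n + 1),
        (treeC q k : ℝ) * (T.Nmax phi k n : ℝ) / (treeC q n : ℝ) = 1) ∧
      (∀ k n : ℕ, ∀ w : T.V, T.level w = k → T.Nphi phi n w = T.Nmax phi k n) ∧
      (∀ k : ℕ, (⨆ n : ℕ,
        (treeC q k : ℝ) * (T.Nmax phi k n : ℝ) / (treeC q n : ℝ)) = 1)) := by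
  have hp0 : 0 < p := one_pos.trans_le hp
  have hq0 : 0 < q := by omega
  show T.IsIsometryComp p phi ↔ _
  constructor
  · intro h
    have h1 := h.level_map_le hp0 hq
    have h3 : ∀ k n : ℕ, ∀ w : T.V, T.level w = k → T.Nphi phi n w = T.Nmax phi k n :=
      fun _ _ _ hw => h.Nphi_eq_Nmax hp0 hq0 hw
    exact ⟨h1, HomTree.sum_lam_eq_one hq0 h1 h3, h3, h.iSup_lam hp0 hq0⟩
  · rintro ⟨h1, h2, h3, h4⟩
    exact HomTree.isIsometryComp_of_lam hp0 hq0 h1 h2 h3 h4
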